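/- arXiv:1212.1488 — 3 statements merged into one kernel-verified Lean document; each statement's English description precedes it below -/
import Mathlib

section
/- Let $Q$ be a column-stochastic $k\times k$ matrix, $\alpha \in \mathbb{R}^k$ with all $\alpha_j > 0$, and suppose $Q_\alpha = Q\,\mathrm{diag}(\alpha)$ is primitive, with unique rest point $\hat w \in S_k$ (the Perron eigenvector). Then for every solution $w$ of Eigen's quasispecies system $\dot w_i = (Q_\alpha w)_i - w_i f(t)$, $f(t) = (\alpha, w(t))$, with initial condition $w(0) \in S_k$, there exist positive constants $K$ and $\kappa$ such that $|w_i(t) - \hat w_i| \le K e^{-\kappa t}$ for all $i$ and all $t \ge 0$; in particular $w(t) \to \hat w$ as $t \to \infty$. -/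
/-! With `A = Q diag(α)`, column-stochasticity of `Q` gives `∑ᵢ (A x)ᵢ = (α, x)`, so the
normalisation `φ(t) / ∑ᵢ φᵢ(t)` of the linear flow `φ(t) = e^{tA} w(0)` solves Eigen's system and,
the field being locally Lipschitz, equals `w(t)`.

The distance from `φ(t)` to the ray of `ŵ` is measured in Hilbert's projective metric. The flow
`e^{tA}` is nonnegative and maps `ŵ` to `e^{t f̄} ŵ`, so it never increases that distance; since
`A^p > 0`, the time-one map `e^{A}` dominates `x ↦ ε (∑ x) ŵ` for some `ε > 0`, and Birkhoff's
argument shows that it contracts the distance by the factor `1 - ε e^{-f̄} < 1`. Hence the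
distance decays exponentially, and on the simplex it bounds `|wᵢ(t) - ŵᵢ|`. -/

open Matrix

open Finset Set Real
open scoped Nat

lemma exists_pow_floor_le_exp {θ : ℝ} (h₀ : 0 ≤ θ) (h₁ : θ < 1) :
    ∃ κ > 0, ∀ t, 0 ≤ t → θ ^ ⌊t⌋₊ ≤ exp κ * exp (-κ * t) := by
  refine ⟨1 - θ, by linarith, fun t ht => ?_⟩
  have hθ : θ ≤ exp (-(1 - θ)) := by linarith [add_one_le_exp (-(1 - θ))]
  calc θ ^ ⌊t⌋₊ ≤ exp (-(1 - θ)) ^ ⌊t⌋₊ := pow_le_pow_left₀ h₀ hθ _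
    _ = exp (-(1 - θ) * ⌊t⌋₊) := by rw [← exp_nat_mul, mul_comm]
    _ ≤ exp ((1 - θ) + -(1 - θ) * t) := exp_le_exp.2 (by nlinarith [Nat.lt_floor_add_one t])
    _ = exp (1 - θ) * exp (-(1 - θ) * t) := exp_add _ _

theorem eqOn_Ici_of_hasDerivAt {E : Type*} [NormedAddCommGroup E] [NormedSpace ℝ E]
    {V : E → E} (hV : LocallyLipschitz V) {f g : ℝ → E}
    (hf : ∀ t, 0 ≤ t → HasDerivAt f (V (f t)) t) (hg : ∀ t, 0 ≤ t → HasDerivAt g (V (g t)) t)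
    (h₀ : f 0 = g 0) : EqOn f g (Ici 0) := by
  intro T hT
  have hfc : ContinuousOn f (Icc 0 T) := fun t ht => (hf t ht.1).continuousAt.continuousWithinAt
  have hgc : ContinuousOn g (Icc 0 T) := fun t ht => (hg t ht.1).continuousAt.continuousWithinAt
  obtain ⟨K, hK⟩ := hV.locallyLipschitzOn.exists_lipschitzOnWith_of_compact
    ((isCompact_Icc.image_of_continuousOn hfc).union (isCompact_Icc.image_of_continuousOn hgc))
  exact ODE_solution_unique_of_mem_Icc_right (v := fun _ => V) (fun _ _ => hK)
    hfc (fun t ht => (hf t ht.1).hasDerivWithinAt)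
    (fun t ht => Or.inl (mem_image_of_mem f (Ico_subset_Icc_self ht)))
    hgc (fun t ht => (hg t ht.1).hasDerivWithinAt)
    (fun t ht => Or.inr (mem_image_of_mem g (Ico_subset_Icc_self ht))) h₀ ⟨hT, le_rfl⟩

variable {ι : Type*}

/-- Hilbert's projective distance from `v` to `e` is at most `log (1 + r)`. -/
def IsPinched (e v : ι → ℝ) (r : ℝ) : Prop :=
  ∃ a > 0, a • e ≤ v ∧ v ≤ ((1 + r) * a) • e

namespace IsPinched

variable {e v : ι → ℝ} {r : ℝ}

lemma of_le {a b : ℝ} (ha : 0 < a) (h₁ : a • e ≤ v) (h₂ : v ≤ b • e) :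
    IsPinched e v (b / a - 1) :=
  ⟨a, ha, h₁, by rwa [add_sub_cancel, div_mul_cancel₀ b ha.ne']⟩

lemma mono (h : IsPinched e v r) {s : ℝ} (hrs : r ≤ s) (he : 0 ≤ e) : IsPinched e v s := by
  obtain ⟨a, ha, h₁, h₂⟩ := h
  exact ⟨a, ha, h₁, h₂.trans (smul_le_smul_of_nonneg_right (by nlinarith) he)⟩

lemma smul (h : IsPinched e v r) {c : ℝ} (hc : 0 < c) : IsPinched e (c • v) r := by
  obtain ⟨a, ha, h₁, h₂⟩ := h
  refine ⟨c * a, mul_pos hc ha, ?_, ?_⟩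
  · rw [mul_smul]; exact smul_le_smul_of_nonneg_left h₁ hc.le
  · rw [mul_left_comm, mul_smul]; exact smul_le_smul_of_nonneg_left h₂ hc.le

lemma nonneg [Nonempty ι] (h : IsPinched e v r) (he : ∀ i, 0 < e i) : 0 ≤ r := by
  obtain ⟨a, ha, h₁, h₂⟩ := h
  obtain ⟨i⟩ := ‹Nonempty ι›
  have := (h₁ i).trans (h₂ i)
  simp only [Pi.smul_apply, smul_eq_mul] at this
  nlinarith [mul_pos ha (he i)]

lemma abs_sub_le [Fintype ι] (h : IsPinched e v r) (he : e ∈ stdSimplex ℝ ι)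
    (hv : v ∈ stdSimplex ℝ ι) (i : ι) : |v i - e i| ≤ r := by
  obtain ⟨a, ha, h₁, h₂⟩ := h
  have ha1 : a ≤ 1 := by
    simpa [← mul_sum, he.2, hv.2] using sum_le_sum (s := univ) fun i _ => h₁ i
  have hb1 : 1 ≤ (1 + r) * a := by
    simpa [← mul_sum, he.2, hv.2] using sum_le_sum (s := univ) fun i _ => h₂ i
  have hei := mem_Icc_of_mem_stdSimplex he i
  have h₁i := h₁ i
  have h₂i := h₂ i
  simp only [Pi.smul_apply, smul_eq_mul] at h₁i h₂i
  have hr : 0 ≤ r := by nlinarith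
  have hrae : r * a * e i ≤ r := by
    nlinarith [mul_nonneg (mul_nonneg hr ha.le) (sub_nonneg.2 hei.2),
      mul_nonneg hr (sub_nonneg.2 ha1)]
  rw [abs_sub_le_iff]
  constructor <;> nlinarith [mul_le_mul_of_nonneg_right (by linarith : 1 - a ≤ r * a) hei.1,
    mul_le_mul_of_nonneg_right ha1 hei.1]

lemma exists_abs_sub_le_exp [Fintype ι] {u : ℝ → ι → ℝ} {C κ : ℝ} (he : e ∈ stdSimplex ℝ ι)
    (hu : ∀ t, 0 ≤ t → u t ∈ stdSimplex ℝ ι) (hκ : 0 < κ)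
    (h : ∀ t, 1 ≤ t → IsPinched e (u t) (C * exp (-κ * t))) :
    ∃ K, 0 < K ∧ ∀ i t, 0 ≤ t → |u t i - e i| ≤ K * exp (-κ * t) := by
  refine ⟨|C| + exp κ, by positivity, fun i t ht => ?_⟩
  rcases le_or_gt 1 t with h1 | h1
  · calc |u t i - e i| ≤ C * exp (-κ * t) := (h t h1).abs_sub_le he (hu t ht) i
      _ ≤ _ := mul_le_mul_of_nonneg_right (by linarith [le_abs_self C, exp_pos κ]) (exp_pos _).le
  · calc |u t i - e i| ≤ 1 :=
          abs_sub_le_of_nonneg_of_le ((hu t ht).1 i) (mem_Icc_of_mem_stdSimplex (hu t ht) i).2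
            (he.1 i) (mem_Icc_of_mem_stdSimplex he i).2
      _ ≤ exp κ * exp (-κ * t) := by rw [← exp_add]; exact one_le_exp (by nlinarith)
      _ ≤ _ := mul_le_mul_of_nonneg_right (by linarith [abs_nonneg C]) (exp_pos _).le

end IsPinched

section Birkhoff

variable [Fintype ι] [Nonempty ι] {F : Type*} [FunLike F (ι → ℝ) (ι → ℝ)]
  [LinearMapClass F ℝ (ι → ℝ) (ι → ℝ)] {L : F} {e v : ι → ℝ} {r μ ε : ℝ}

omit [LinearMapClass F ℝ (ι → ℝ) (ι → ℝ)] in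
lemma mul_sum_le_of_smul_sum_le_map (he : ∀ i, 0 < e i) (hLe : L e = μ • e)
    (hL : ∀ x, 0 ≤ x → (ε * ∑ i, x i) • e ≤ L x) : ε * ∑ i, e i ≤ μ := by
  obtain ⟨i⟩ := ‹Nonempty ι›
  have := hL e fun j => (he j).le
  rw [hLe] at this
  exact le_of_mul_le_mul_right (this i) (he i)

lemma IsPinched.exists_of_smul_sum_le_map (he : ∀ i, 0 < e i) (hε : 0 < ε) (hLe : L e = μ • e)
    (hL : ∀ x, 0 ≤ x → (ε * ∑ i, x i) • e ≤ L x) (hv : 0 ≤ v) (hv₀ : 0 < ∑ i, v i) :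
    ∃ r, IsPinched e (L v) r := by
  have hL_nonneg : ∀ x, 0 ≤ x → 0 ≤ L x := fun x hx =>
    (smul_nonneg (mul_nonneg hε.le (sum_nonneg fun i _ => hx i)) fun i => (he i).le).trans (hL x hx)
  obtain ⟨j, hj⟩ := Finite.exists_max fun i => v i / e i
  have hve : v ≤ (v j / e j) • e := fun i => by
    simpa using (div_le_iff₀ (he i)).1 (hj i)
  have hLv : L v ≤ (v j / e j * μ) • e := by
    have := hL_nonneg _ (sub_nonneg.2 hve)
    rwa [map_sub, map_smul, hLe, smul_smul, sub_nonneg] at this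
  exact ⟨_, IsPinched.of_le (mul_pos hε hv₀) (hL v hv) hLv⟩

/-- Birkhoff's contraction. Writing `v = a e + x = (1 + r) a e - y` with `x, y ≥ 0`, domination
raises the lower bound by `ε ∑ x` and lowers the upper one by `ε ∑ y`, and
`∑ x + ∑ y = r a ∑ e`. -/
lemma IsPinched.map (he : ∀ i, 0 < e i) (hμ : 0 < μ) (hε : 0 ≤ ε) (hLe : L e = μ • e)
    (hL : ∀ x, 0 ≤ x → (ε * ∑ i, x i) • e ≤ L x) (h : IsPinched e v r) :
    IsPinched e (L v) ((1 - ε * (∑ i, e i) / μ) * r) := by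
  have hr := h.nonneg he
  obtain ⟨a, ha, h₁, h₂⟩ := h
  set s := ∑ i, e i
  set θ := 1 - ε * s / μ
  have hθ : 0 ≤ θ := by
    rw [sub_nonneg, div_le_one hμ]; exact mul_sum_le_of_smul_sum_le_map he hLe hL
  set x := v - a • e
  set y := ((1 + r) * a) • e - v
  have hx : 0 ≤ x := sub_nonneg.2 h₁
  have hy : 0 ≤ y := sub_nonneg.2 h₂
  have hsum : ∑ i, x i + ∑ i, y i = r * a * s := by
    simp only [x, y, ← sum_add_distrib, Pi.sub_apply, Pi.smul_apply, smul_eq_mul, s, mul_sum]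
    exact sum_congr rfl fun i _ => by ring
  have hLv₁ : L v = (a * μ) • e + L x := by
    rw [map_sub, map_smul, hLe, smul_smul]; abel
  have hLv₂ : L v = ((1 + r) * a * μ) • e - L y := by
    rw [map_sub, map_smul, hLe, smul_smul]; abel
  have hSx : 0 ≤ ∑ i, x i := sum_nonneg fun i _ => hx i
  have key : (1 + r) * a * μ - ε * ∑ i, y i ≤ (1 + θ * r) * (a * μ + ε * ∑ i, x i) := by
    have hθra : θ * r * (a * μ) = r * a * μ - ε * (r * a * s) := by
      rw [show θ * r * (a * μ) = r * a * (θ * μ) by ring]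
      simp only [θ]; field_simp
    nlinarith [mul_nonneg (mul_nonneg hθ hr) (mul_nonneg hε hSx), congrArg (ε * ·) hsum]
  refine ⟨a * μ + ε * ∑ i, x i, by positivity, ?_, ?_⟩
  · rw [hLv₁, add_smul]; exact add_le_add le_rfl (hL x hx)
  · calc L v ≤ ((1 + r) * a * μ) • e - (ε * ∑ i, y i) • e := by
          rw [hLv₂]; exact sub_le_sub_left (hL y hy) _
      _ = ((1 + r) * a * μ - ε * ∑ i, y i) • e := (sub_smul _ _ _).symm
      _ ≤ _ := smul_le_smul_of_nonneg_right key fun i => (he i).le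

end Birkhoff

variable [Fintype ι]

/-- For `A = Q diag(α)` with `Q` column-stochastic, the mean fitness `∑ᵢ (A x)ᵢ` is Eigen's
`f = (α, x)` (`sum_mul_diagonal_mulVec`). -/
def quasispeciesField (A : Matrix ι ι ℝ) (x : ι → ℝ) : ι → ℝ :=
  A *ᵥ x - (∑ i, (A *ᵥ x) i) • x

lemma contDiff_quasispeciesField (A : Matrix ι ι ℝ) : ContDiff ℝ 1 (quasispeciesField A) := by
  have : ContDiff ℝ 1 (A *ᵥ ·) := (LinearMap.toContinuousLinearMap A.mulVecLin).contDiff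
  unfold quasispeciesField
  fun_prop

lemma hasDerivAt_inv_sum_smul (A : Matrix ι ι ℝ) {y : ℝ → ι → ℝ} {t : ℝ}
    (hy : HasDerivAt y (A *ᵥ y t) t) (hS : ∑ i, y t i ≠ 0) :
    HasDerivAt (fun s => (∑ i, y s i)⁻¹ • y s)
      (quasispeciesField A ((∑ i, y t i)⁻¹ • y t)) t := by
  have hsum : HasDerivAt (fun s => ∑ i, y s i) (∑ i, (A *ᵥ y t) i) t :=
    HasDerivAt.fun_sum fun i _ => hasDerivAt_pi.1 hy i
  refine ((hsum.fun_inv hS).fun_smul hy).congr_deriv ?_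
  simp only [quasispeciesField, mulVec_smul, Pi.smul_apply, smul_eq_mul, ← mul_sum]
  rw [smul_smul, sub_eq_add_neg, ← neg_smul]
  congr 2
  ring

lemma Matrix.mulVec_nonneg {A : Matrix ι ι ℝ} (hA : ∀ i j, 0 ≤ A i j) {v : ι → ℝ} (hv : 0 ≤ v) :
    0 ≤ A *ᵥ v :=
  fun i => sum_nonneg fun j _ => mul_nonneg (hA i j) (hv j)

noncomputable def expFlow (A : Matrix ι ι ℝ) (t : ℝ) : (ι → ℝ) →L[ℝ] ι → ℝ :=
  NormedSpace.exp (t • LinearMap.toContinuousLinearMap A.mulVecLin)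

namespace expFlow

variable (A : Matrix ι ι ℝ)

@[simp] lemma zero : expFlow A 0 = 1 := by simp [expFlow]

lemma add (s t : ℝ) : expFlow A (s + t) = expFlow A s * expFlow A t := by
  rw [expFlow, add_smul]
  exact NormedSpace.exp_add_of_commute_of_mem_ball (𝕂 := ℝ)
    (((Commute.refl _).smul_left s).smul_right t)
    (by simp [NormedSpace.expSeries_radius_eq_top]) (by simp [NormedSpace.expSeries_radius_eq_top])

lemma hasDerivAt_apply (v : ι → ℝ) (t : ℝ) :
    HasDerivAt (fun s => expFlow A s v) (A *ᵥ expFlow A t v) t := by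
  have h := (hasDerivAt_exp_smul_const' (𝕂 := ℝ)
    (LinearMap.toContinuousLinearMap A.mulVecLin) t).clm_apply (hasDerivAt_const t v)
  simp only [mul_apply_eq_comp, map_zero, add_zero] at h
  exact h

end expFlow

variable [DecidableEq ι]

lemma Matrix.pow_mulVec_nonneg {A : Matrix ι ι ℝ} (hA : ∀ i j, 0 ≤ A i j) {v : ι → ℝ}
    (hv : 0 ≤ v) (n : ℕ) : 0 ≤ A ^ n *ᵥ v := by
  induction n with
  | zero => simpa using hv
  | succ n ih => rw [pow_succ', ← mulVec_mulVec]; exact mulVec_nonneg hA ih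

namespace expFlow

section

variable (A : Matrix ι ι ℝ)

lemma hasSum_apply (t : ℝ) (v : ι → ℝ) :
    HasSum (fun n : ℕ => (t ^ n / n !) • (A ^ n *ᵥ v)) (expFlow A t v) := by
  have hpow (n : ℕ) : (LinearMap.toContinuousLinearMap A.mulVecLin ^ n) v = A ^ n *ᵥ v := by
    induction n with
    | zero => simp
    | succ n ih => rw [pow_succ', mul_apply_eq_comp, ih, pow_succ', ← mulVec_mulVec]; rfl
  have h := (NormedSpace.exp_series_hasSum_exp' (𝕂 := ℝ)
    (t • LinearMap.toContinuousLinearMap A.mulVecLin)).mapL (ContinuousLinearMap.apply ℝ _ v)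
  simp only [ContinuousLinearMap.apply_apply, smul_pow, _root_.smul_apply, hpow, smul_smul] at h
  simp only [div_eq_inv_mul]
  exact h

lemma apply_of_mulVec_eq_smul {e : ι → ℝ} {c : ℝ} (h : A *ᵥ e = c • e) (t : ℝ) :
    expFlow A t e = exp (t * c) • e := by
  have hpow (n : ℕ) : A ^ n *ᵥ e = c ^ n • e := by
    induction n with
    | zero => simp
    | succ n ih => rw [pow_succ', ← mulVec_mulVec, ih, mulVec_smul, h, smul_smul, pow_succ]
  refine (hasSum_apply A t e).unique ?_
  rw [exp_eq_exp_ℝ]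
  convert (NormedSpace.expSeries_div_hasSum_exp (t * c)).smul_const e using 2 with n
  rw [hpow, smul_smul, mul_pow, mul_div_right_comm]

end

variable {A : Matrix ι ι ℝ} (hA : ∀ i j, 0 ≤ A i j)
include hA

lemma pow_div_factorial_smul_le_apply {t : ℝ} (ht : 0 ≤ t) {v : ι → ℝ} (hv : 0 ≤ v) (n : ℕ) :
    (t ^ n / n !) • (A ^ n *ᵥ v) ≤ expFlow A t v :=
  le_hasSum (hasSum_apply A t v) n fun m _ =>
    smul_nonneg (by positivity) (pow_mulVec_nonneg hA hv m)

lemma le_apply {t : ℝ} (ht : 0 ≤ t) {v : ι → ℝ} (hv : 0 ≤ v) : v ≤ expFlow A t v := by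
  simpa using pow_div_factorial_smul_le_apply hA ht hv 0

lemma sum_pos {t : ℝ} (ht : 0 ≤ t) {v : ι → ℝ} (hv : v ∈ stdSimplex ℝ ι) :
    0 < ∑ i, expFlow A t v i :=
  calc 0 < ∑ i, v i := by rw [hv.2]; exact one_pos
    _ ≤ _ := sum_le_sum fun i _ => le_apply hA ht hv.1 i

lemma inv_sum_smul_mem_stdSimplex {t : ℝ} (ht : 0 ≤ t) {v : ι → ℝ} (hv : v ∈ stdSimplex ℝ ι) :
    (∑ i, expFlow A t v i)⁻¹ • expFlow A t v ∈ stdSimplex ℝ ι := by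
  have hS := sum_pos hA ht hv
  refine ⟨fun i => smul_nonneg (inv_nonneg.2 hS.le) ((hv.1 i).trans (le_apply hA ht hv.1 i)), ?_⟩
  simp [← mul_sum, hS.ne']

lemma exists_mul_sum_le_one_apply [Nonempty ι] {p : ℕ} (hp : ∀ i j, 0 < (A ^ p) i j) :
    ∃ ε > 0, ∀ x, 0 ≤ x → ∀ i, ε * ∑ j, x j ≤ expFlow A 1 x i := by
  obtain ⟨⟨i₀, j₀⟩, hmin⟩ := Finite.exists_min fun ij : ι × ι => (A ^ p) ij.1 ij.2
  refine ⟨(A ^ p) i₀ j₀ / p !, by have := hp i₀ j₀; positivity, fun x hx i => ?_⟩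
  calc (A ^ p) i₀ j₀ / p ! * ∑ j, x j = (1 : ℝ) ^ p / p ! * ∑ j, (A ^ p) i₀ j₀ * x j := by
        rw [← mul_sum]; ring
    _ ≤ (1 : ℝ) ^ p / p ! * (A ^ p *ᵥ x) i :=
        mul_le_mul_of_nonneg_left (sum_le_sum fun j _ =>
          mul_le_mul_of_nonneg_right (hmin (i, j)) (hx j)) (by positivity)
    _ ≤ expFlow A 1 x i := pow_div_factorial_smul_le_apply hA zero_le_one hx p i

end expFlow

section PerronFrobenius

variable [Nonempty ι] {A : Matrix ι ι ℝ} {e v : ι → ℝ} {c : ℝ}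
  (hA : ∀ i j, 0 ≤ A i j) (he : ∀ i, 0 < e i) (hAe : A *ᵥ e = c • e)
include hA he hAe

lemma IsPinched.expFlow_apply {r : ℝ} (h : IsPinched e v r) {t : ℝ} (ht : 0 ≤ t) :
    IsPinched e (expFlow A t v) r := by
  simpa using h.map he (exp_pos (t * c)) le_rfl (expFlow.apply_of_mulVec_eq_smul A hAe t)
    fun x hx => by simpa using hx.trans (expFlow.le_apply hA ht hx)

lemma IsPinched.expFlow_apply_floor {θ r : ℝ}
    (hθ : ∀ u s, IsPinched e u s → IsPinched e (expFlow A 1 u) (θ * s))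
    (h : IsPinched e v r) {t : ℝ} (ht : 0 ≤ t) :
    IsPinched e (expFlow A t v) (θ ^ ⌊t⌋₊ * r) := by
  have hn (n : ℕ) : IsPinched e (expFlow A n v) (θ ^ n * r) := by
    induction n with
    | zero => simpa using h
    | succ n ih =>
      rw [Nat.cast_succ, add_comm, expFlow.add, mul_apply_eq_comp, pow_succ', mul_assoc]
      exact hθ _ _ ih
  have := (hn ⌊t⌋₊).expFlow_apply hA he hAe (sub_nonneg.2 (Nat.floor_le ht))
  rwa [← mul_apply_eq_comp, ← expFlow.add, sub_add_cancel] at this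

theorem expFlow.exists_isPinched {p : ℕ} (hp : ∀ i j, 0 < (A ^ p) i j) (he₁ : ∑ i, e i = 1)
    (hv : 0 ≤ v) (hv₀ : 0 < ∑ i, v i) :
    ∃ C κ : ℝ, 0 < κ ∧ ∀ t, 1 ≤ t → IsPinched e (expFlow A t v) (C * exp (-κ * t)) := by
  have hLe : expFlow A 1 e = exp c • e := by simpa using expFlow.apply_of_mulVec_eq_smul A hAe 1
  obtain ⟨ε, hε, hε'⟩ := expFlow.exists_mul_sum_le_one_apply hA hp
  have hdom : ∀ x, 0 ≤ x → (ε * ∑ i, x i) • e ≤ expFlow A 1 x := fun x hx i =>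
    (mul_le_of_le_one_right (mul_nonneg hε.le (sum_nonneg fun j _ => hx j))
      (mem_Icc_of_mem_stdSimplex ⟨fun j => (he j).le, he₁⟩ i).2).trans (hε' x hx i)
  have hεμ : ε ≤ exp c := by simpa [he₁] using mul_sum_le_of_smul_sum_le_map he hLe hdom
  obtain ⟨r, hr⟩ := IsPinched.exists_of_smul_sum_le_map he hε hLe hdom hv hv₀
  obtain ⟨κ, hκ, hθκ⟩ := exists_pow_floor_le_exp (θ := 1 - ε / exp c)
    (by rwa [sub_nonneg, div_le_one (exp_pos c)]) (by linarith [div_pos hε (exp_pos c)])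
  refine ⟨r * exp (2 * κ), κ, hκ, fun t ht => ?_⟩
  have hpin := hr.expFlow_apply_floor hA he hAe
    (fun u s hu => by simpa [he₁] using hu.map he (exp_pos c) hε.le hLe hdom)
    (sub_nonneg.2 ht : 0 ≤ t - 1)
  rw [← mul_apply_eq_comp, ← expFlow.add, sub_add_cancel] at hpin
  refine hpin.mono ?_ fun i => (he i).le
  calc (1 - ε / exp c) ^ ⌊t - 1⌋₊ * r ≤ exp κ * exp (-κ * (t - 1)) * r :=
        mul_le_mul_of_nonneg_right (hθκ _ (by linarith)) (hr.nonneg he)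
    _ = r * exp (2 * κ) * exp (-κ * t) := by
        rw [← exp_add, mul_assoc, ← exp_add]; ring_nf

end PerronFrobenius

lemma sum_mul_diagonal_mulVec {Q : Matrix ι ι ℝ} (hQ : Q ∈ colStochastic ℝ ι) (α x : ι → ℝ) :
    ∑ i, ((Q * diagonal α) *ᵥ x) i = ∑ j, α j * x j := by
  rw [← mulVec_mulVec, sum_mulVec_of_mem_colStochastic hQ]
  simp [mulVec_diagonal]

theorem eq_inv_sum_smul_expFlow {A : Matrix ι ι ℝ} (hA : ∀ i j, 0 ≤ A i j) {v : ι → ℝ}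
    (hv : v ∈ stdSimplex ℝ ι) {w : ℝ → ι → ℝ}
    (hw : ∀ t, 0 ≤ t → HasDerivAt w (quasispeciesField A (w t)) t) (hw₀ : w 0 = v)
    {t : ℝ} (ht : 0 ≤ t) : w t = (∑ i, expFlow A t v i)⁻¹ • expFlow A t v :=
  eqOn_Ici_of_hasDerivAt (contDiff_quasispeciesField A).locallyLipschitz hw
    (fun s hs => hasDerivAt_inv_sum_smul A (expFlow.hasDerivAt_apply A v s)
      (expFlow.sum_pos hA hs hv).ne')
    (by simp [hw₀, hv.2]) ht

/-- For a column-stochastic `Q`, positive fitnesses `α`, and primitive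
`Qα = Q diag(α)` with Perron eigenvector (unique rest point) `what`, every solution of
Eigen's quasispecies system starting in the simplex converges to `what` exponentially:
`|w i (t) - what i| ≤ K e^{-κ t}` for some `K, κ > 0`. -/
theorem eigen_solutions_converge_exponentially
    (k : ℕ) (Q : Matrix (Fin k) (Fin k) ℝ)
    (hQnn : ∀ i j, 0 ≤ Q i j) (hQst : ∀ j, ∑ i, Q i j = 1)
    (α : Fin k → ℝ) (hα : ∀ j, 0 < α j)
    (hprim : ∃ p : ℕ, 0 < p ∧ ∀ i j, 0 < ((Q * Matrix.diagonal α) ^ p) i j)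
    (what : Fin k → ℝ) (fbar : ℝ)
    (hwpos : ∀ i, 0 < what i) (hwsum : ∑ i, what i = 1)
    (hweig : (Q * Matrix.diagonal α).mulVec what = fbar • what)
    (w : ℝ → Fin k → ℝ)
    (hw : ∀ t : ℝ, 0 ≤ t → ∀ i : Fin k,
      HasDerivAt (fun s => w s i)
        (((Q * Matrix.diagonal α).mulVec (w t)) i - w t i * ∑ j, α j * w t j) t)
    (h0nn : ∀ i, 0 ≤ w 0 i) (h0sum : ∑ i, w 0 i = 1) :
    ∃ K : ℝ, 0 < K ∧ ∃ κ : ℝ, 0 < κ ∧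
      ∀ (i : Fin k) (t : ℝ), 0 ≤ t → |w t i - what i| ≤ K * Real.exp (-κ * t) := by
  have : Nonempty (Fin k) := Fin.pos_iff_nonempty.1 (Nat.pos_of_ne_zero fun hk => by
    subst hk; simp at h0sum)
  set A := Q * diagonal α
  have hA : ∀ i j, 0 ≤ A i j := fun i j => by
    simpa [A, mul_diagonal] using mul_nonneg (hQnn i j) (hα j).le
  have hfit : ∀ x, ∑ i, (A *ᵥ x) i = ∑ j, α j * x j :=
    sum_mul_diagonal_mulVec (mem_colStochastic_iff_sum.2 ⟨hQnn, hQst⟩) α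
  have hw₀ : w 0 ∈ stdSimplex ℝ (Fin k) := ⟨h0nn, h0sum⟩
  have hwhat : what ∈ stdSimplex ℝ (Fin k) := ⟨fun i => (hwpos i).le, hwsum⟩
  have hsol (t : ℝ) (ht : 0 ≤ t) : HasDerivAt w (quasispeciesField A (w t)) t :=
    hasDerivAt_pi.2 fun i => by
      simpa [quasispeciesField, hfit, mul_comm] using hw t ht i
  have hw_eq (t : ℝ) (ht : 0 ≤ t) := eq_inv_sum_smul_expFlow hA hw₀ hsol rfl ht
  have hwt (t : ℝ) (ht : 0 ≤ t) : w t ∈ stdSimplex ℝ (Fin k) :=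
    hw_eq t ht ▸ expFlow.inv_sum_smul_mem_stdSimplex hA ht hw₀
  obtain ⟨p, -, hp⟩ := hprim
  obtain ⟨C, κ, hκ, hC⟩ := expFlow.exists_isPinched hA hwpos hweig hp hwsum h0nn (by simp [h0sum])
  obtain ⟨K, hK, hbound⟩ := IsPinched.exists_abs_sub_le_exp hwhat hwt hκ fun t h1 => by
    rw [hw_eq t (by linarith)]
    exact (hC t h1).smul (inv_pos.2 (expFlow.sum_pos hA (by linarith) hw₀))
  exact ⟨K, hK, κ, hκ, hbound⟩
end

section
/- Let $D$ and $Q_\alpha$ be real $k\times k$ matrices, $\hat w \in \mathbb{R}^k$ and $\bar f \in \mathbb{R}$ with $Q_\alpha \hat w = \bar f\, \hat w$ and $D\hat w = 0$. Let $\Omega \subseteq \mathbb{R}^m$ be open, $\lambda \in \mathbb{R}$, and $\psi : \mathbb{R}^m \to \mathbb{R}$ a twice continuously differentiable function satisfying $\Delta \psi(x) = -\lambda\, \psi(x)$ for all $x \in \Omega$. Then for any constant $c \in \mathbb{R}$ the vector function $v(x) = c\,\hat w\,(1 + \psi(x))$ satisfies, for every $i = 1,\ldots,k$ and every $x \in \Omega$,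 the steady-state equation $\sum_{j=1}^k d_{ij}\,\Delta v_j(x) + (Q_\alpha v(x))_i - \bar f\, v_i(x) = 0$. -/
open Matrix

/-- The Laplace operator `Δ f (x) = ∑ i ∂²f/∂xᵢ² (x)` on functions of `m` real
variables: the sum of the second derivatives of the one-variable coordinate slices. -/
noncomputable def laplacian {m : ℕ} (f : (Fin m → ℝ) → ℝ) (x : Fin m → ℝ) : ℝ :=
  ∑ i, iteratedDeriv 2 (fun s => f (Function.update x i s)) (x i)

/-! Write `v = g ŵ` with `g = c (1 + ψ)`. Since `D ŵ = 0`, the diffusion term `D Δv = (Δg) D ŵ`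
vanishes, and the reaction term `Q_α v - f̄ v = g (Q_α ŵ - f̄ ŵ)` vanishes pointwise. -/

theorem laplacian_const_mul {m : ℕ} (a : ℝ) (f : (Fin m → ℝ) → ℝ) (x : Fin m → ℝ) :
    laplacian (fun y => a * f y) x = a * laplacian f x := by
  simp only [laplacian, iteratedDeriv_const_mul_field, Finset.mul_sum]

theorem sum_mul_laplacian_eq_zero_of_mulVec_eq_zero {k m : ℕ} (D : Matrix (Fin k) (Fin k) ℝ)
    {w : Fin k → ℝ} (hw : D *ᵥ w = 0) (g : (Fin m → ℝ) → ℝ) (x : Fin m → ℝ) (i : Fin k) :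
    ∑ j, D i j * laplacian (fun y => w j * g y) x = 0 := by
  have hrow : ∑ j, D i j * w j = 0 := congrFun hw i
  simp only [laplacian_const_mul, ← mul_assoc, ← Finset.sum_mul, hrow, zero_mul]

theorem steady_state_nonuniqueness_zero_eigenvalue_general
    (k m : ℕ) (D Qα : Matrix (Fin k) (Fin k) ℝ)
    (what : Fin k → ℝ) (fbar : ℝ)
    (heig : Qα.mulVec what = fbar • what)
    (hker : D.mulVec what = 0)
    (Ω : Set (Fin m → ℝ))
    (ψ : (Fin m → ℝ) → ℝ)
    (c : ℝ) :
    ∀ x ∈ Ω, ∀ i : Fin k,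
      (∑ j, D i j * laplacian (fun y => c * what j * (1 + ψ y)) x) +
        (Qα.mulVec (fun j => c * what j * (1 + ψ x))) i -
        fbar * (c * what i * (1 + ψ x)) = 0 := by
  intro x _ i
  have hprofile : ∀ y j, c * what j * (1 + ψ y) = what j * (c * (1 + ψ y)) := fun _ _ => by
    ring
  have hdiffusion : ∑ j, D i j * laplacian (fun y => c * what j * (1 + ψ y)) x = 0 := by
    simp only [hprofile]
    exact sum_mul_laplacian_eq_zero_of_mulVec_eq_zero D hker _ x i
  have hreaction : Qα *ᵥ (fun j => c * what j * (1 + ψ x)) = (c * (1 + ψ x) * fbar) • what := by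
    rw [show (fun j => c * what j * (1 + ψ x)) = (c * (1 + ψ x)) • what by
      ext j; simp only [Pi.smul_apply, smul_eq_mul]; ring,
      mulVec_smul, heig, smul_smul]
  rw [hdiffusion, hreaction, Pi.smul_apply, smul_eq_mul]
  ring

/-- If `Qα what = fbar • what`, `D what = 0`, and `Δψ = -λ ψ` on an open
set `Ω`, then for any constant `c` the vector function `v(x) = c • what • (1 + ψ(x))`
satisfies the steady-state equation `D Δv + Qα v - fbar v = 0` of the distributed Eigen
system on `Ω`. -/
theorem steady_state_nonuniqueness_zero_eigenvalue
    (k m : ℕ) (D Qα : Matrix (Fin k) (Fin k) ℝ)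
    (what : Fin k → ℝ) (fbar : ℝ)
    (heig : Qα.mulVec what = fbar • what)
    (hker : D.mulVec what = 0)
    (Ω : Set (Fin m → ℝ)) (hΩ : IsOpen Ω)
    (lam : ℝ) (ψ : (Fin m → ℝ) → ℝ)
    (hψC : ContDiff ℝ 2 ψ)
    (hψ : ∀ x ∈ Ω, laplacian ψ x = -lam * ψ x)
    (c : ℝ) :
    ∀ x ∈ Ω, ∀ i : Fin k,
      (∑ j, D i j * laplacian (fun y => c * what j * (1 + ψ y)) x) +
        (Qα.mulVec (fun j => c * what j * (1 + ψ x))) i -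
        fbar * (c * what i * (1 + ψ x)) = 0 :=
  steady_state_nonuniqueness_zero_eigenvalue_general k m D Qα what fbar heig hker Ω ψ c
end

section
/- Let $D$ and $Q_\alpha$ be real $k\times k$ matrices, $\hat w \in \mathbb{R}^k$ and $\bar f \in \mathbb{R}$ with $Q_\alpha \hat w = \bar f\,\hat w$ and $D\hat w = 0$. Let $\psi : \mathbb{R}^m \to \mathbb{R}$ be twice continuously differentiable with $\Delta\psi(x) = -\lambda\,\psi(x)$ for all $x$ in an open set $\Omega \subseteq \mathbb{R}^m$, and let $w : \mathbb{R} \to \mathbb{R}^k$ be a differentiable solution of $\dot w = Q_\alpha w - \bar f\, w$. Then the function $u(x,t) = w(t) + \hat w\,\psi(x)$ satisfies, for all $x \in \Omega$, $t \in \mathbb{R}$, and $i = 1,\ldots,k$, the distributed equation $\partial_t u_i(x,t) = (Q_\alpha u(x,t))_i - \bar f\, u_i(x,t) + \sum_{j=1}^k d_{ij}\,\Delta_x u_j(x,t)$. -/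
open Matrix

/-!
The spatial Laplacian of `u_j(·, t) = w_j(t) + ŵ_j ψ` is `ŵ_j Δψ`, so the diffusion term is
`(D ŵ)_i Δψ = 0`. Since `ŵ` is an eigenvector of `Qα` for `f̄`, the `ψ`-part of the reaction
term `Qα u - f̄ u` cancels as well, and what remains is the equation satisfied by `w`.
-/

theorem laplacian_const_add_mul {m : ℕ} (ψ : (Fin m → ℝ) → ℝ) (c a : ℝ) (x : Fin m → ℝ) :
    laplacian (fun y => c + a * ψ y) x = a * laplacian ψ x := by
  simp only [laplacian, Finset.mul_sum]
  refine Finset.sum_congr rfl fun i _ => ?_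
  rw [iteratedDeriv_const_add two_pos, iteratedDeriv_const_mul_field]

theorem sum_mul_laplacian_const_add_mul {k m : ℕ} (D : Matrix (Fin k) (Fin k) ℝ)
    (c v : Fin k → ℝ) (ψ : (Fin m → ℝ) → ℝ) (x : Fin m → ℝ) (i : Fin k) :
    ∑ j, D i j * laplacian (fun y => c j + v j * ψ y) x = (D *ᵥ v) i * laplacian ψ x := by
  simp only [laplacian_const_add_mul, mulVec, dotProduct, Finset.sum_mul, mul_assoc]

theorem Matrix.mulVec_add_smul_sub_of_mulVec_eq_smul {n R : Type*} [Fintype n] [CommRing R]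
    {Q : Matrix n n R} {v : n → R} {μ : R} (hv : Q *ᵥ v = μ • v) (u : n → R) (s : R) :
    Q *ᵥ (u + s • v) - μ • (u + s • v) = Q *ᵥ u - μ • u := by
  rw [mulVec_add, mulVec_smul, hv, smul_comm s μ v, smul_add]
  abel

theorem distributed_solutions_zero_eigenvalue_general
    (k m : ℕ) (D Qα : Matrix (Fin k) (Fin k) ℝ)
    (what : Fin k → ℝ) (fbar : ℝ)
    (heig : Qα.mulVec what = fbar • what)
    (hker : D.mulVec what = 0)
    (Ω : Set (Fin m → ℝ))
    (ψ : (Fin m → ℝ) → ℝ)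
    (w : ℝ → Fin k → ℝ)
    (hw : ∀ (t : ℝ) (i : Fin k),
      HasDerivAt (fun s => w s i) ((Qα.mulVec (w t)) i - fbar * w t i) t) :
    ∀ x ∈ Ω, ∀ (t : ℝ) (i : Fin k),
      HasDerivAt (fun s => w s i + what i * ψ x)
        ((Qα.mulVec (fun j => w t j + what j * ψ x)) i -
          fbar * (w t i + what i * ψ x) +
          ∑ j, D i j * laplacian (fun y => w t j + what j * ψ y) x) t := by
  intro x _ t i
  have hreaction : (Qα *ᵥ fun j => w t j + what j * ψ x) i - fbar * (w t i + what i * ψ x)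
      = (Qα *ᵥ w t) i - fbar * w t i := by
    have hu : (fun j => w t j + what j * ψ x) = w t + ψ x • what := by
      ext j
      simp [mul_comm]
    simpa only [hu, Pi.sub_apply, Pi.add_apply, Pi.smul_apply, smul_eq_mul,
      mul_comm (ψ x)] using
      congrFun (mulVec_add_smul_sub_of_mulVec_eq_smul heig (w t) (ψ x)) i
  rw [hreaction, sum_mul_laplacian_const_add_mul, hker, Pi.zero_apply, zero_mul, add_zero]
  exact (hw t i).add_const _

/-- If `Qα what = fbar • what`, `D what = 0`, `Δψ = -λψ` on an open set
`Ω`, and `w` solves `ẇ = Qα w - fbar w`, then `u(x,t) = w(t) + what ψ(x)` solves the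
distributed equation `∂ₜ u = Qα u - fbar u + D Δₓ u` on `Ω`. -/
theorem distributed_solutions_zero_eigenvalue
    (k m : ℕ) (D Qα : Matrix (Fin k) (Fin k) ℝ)
    (what : Fin k → ℝ) (fbar : ℝ)
    (heig : Qα.mulVec what = fbar • what)
    (hker : D.mulVec what = 0)
    (Ω : Set (Fin m → ℝ)) (hΩ : IsOpen Ω)
    (lam : ℝ) (ψ : (Fin m → ℝ) → ℝ)
    (hψC : ContDiff ℝ 2 ψ)
    (hψ : ∀ x ∈ Ω, laplacian ψ x = -lam * ψ x)
    (w : ℝ → Fin k → ℝ)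
    (hw : ∀ (t : ℝ) (i : Fin k),
      HasDerivAt (fun s => w s i) ((Qα.mulVec (w t)) i - fbar * w t i) t) :
    ∀ x ∈ Ω, ∀ (t : ℝ) (i : Fin k),
      HasDerivAt (fun s => w s i + what i * ψ x)
        ((Qα.mulVec (fun j => w t j + what j * ψ x)) i -
          fbar * (w t i + what i * ψ x) +
          ∑ j, D i j * laplacian (fun y => w t j + what j * ψ y) x) t :=
  distributed_solutions_zero_eigenvalue_general k m D Qα what fbar heig hker Ω ψ w hw
end
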